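/- Suppose dim V = 3. If L is a Lagrangian subspace of V ⊕ V* with dim(L ∩ V*) odd, then the type of L is (0,1), (0,3), or (2,1); that is, (dim(L ∩ V), dim(L ∩ V*)) ∈ {(0,1), (0,3), (2,1)}. -/

import Mathlib

/-!
For `x = (v, ξ)` and `y = (w, η)` put `ω(x, y) = ξ(w)`. On a Lagrangian `L` the form `ω` is
alternating, since `ω(x, x)` is twice the pairing of `x` with itself, and its radical is
`(L ∩ V) ⊕ (L ∩ V*)`: if `ξ` kills the projection of `L` to `V`, then `(0, ξ)` is orthogonal to
`L`, hence lies in `L` by maximality, and `x - (0, ξ) ∈ L ∩ V`. An alternating form has even rank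
(a skew-symmetric matrix of odd size is singular), so `dim V - a - b` is even for the type
`(a, b)` of `L`. With `a + b ≤ dim V = 3` and `b` odd only `(0, 1)`, `(0, 3)` and `(2, 1)` remain.
-/

/-- The canonical split-signature pairing on `V ⊕ V*`. -/
noncomputable def diracPairing {V : Type*} [AddCommGroup V] [Module ℝ V]
    (x y : V × Module.Dual ℝ V) : ℝ :=
  (x.2 y.1 + y.2 x.1) / 2

/-- `L ⊆ V ⊕ V*` is Lagrangian: `dim L = dim V` and the pairing vanishes on `L`. -/
def IsLagrangian {V : Type*} [AddCommGroup V] [Module ℝ V]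
    (L : Submodule ℝ (V × Module.Dual ℝ V)) : Prop :=
  Module.finrank ℝ L = Module.finrank ℝ V ∧
    ∀ x ∈ L, ∀ y ∈ L, diracPairing x y = 0

/-- The type of a Lagrangian `L`: the pair `(dim(L ∩ V), dim(L ∩ V*))`. -/
noncomputable def lagType {V : Type*} [AddCommGroup V] [Module ℝ V]
    (L : Submodule ℝ (V × Module.Dual ℝ V)) : ℕ × ℕ :=
  (Module.finrank ℝ ↥(L ⊓ LinearMap.range (LinearMap.inl ℝ V (Module.Dual ℝ V))),
   Module.finrank ℝ ↥(L ⊓ LinearMap.range (LinearMap.inr ℝ V (Module.Dual ℝ V))))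

open Module LinearMap
open scoped Matrix

theorem Matrix.det_eq_zero_of_transpose_eq_neg {n R : Type*} [Fintype n] [DecidableEq n]
    [CommRing R] [IsAddTorsionFree R] {A : Matrix n n R} (hA : Aᵀ = -A)
    (hn : Odd (Fintype.card n)) : A.det = 0 := by
  rw [← self_eq_neg]
  calc A.det = Aᵀ.det := (Matrix.det_transpose A).symm
    _ = -A.det := by rw [hA, Matrix.det_neg, hn.neg_one_pow, neg_one_mul]

namespace LinearMap.BilinForm.IsAlt

variable {K V : Type*} [Field K] [CharZero K] [AddCommGroup V] [Module K V]
  [FiniteDimensional K V] {B : LinearMap.BilinForm K V}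

theorem even_finrank_of_nondegenerate (hB : B.IsAlt) (hnd : B.Nondegenerate) :
    Even (finrank K V) := by
  by_contra hodd
  let b := Module.finBasis K V
  have hskew : (BilinForm.toMatrix b B)ᵀ = -BilinForm.toMatrix b B := by
    ext i j
    simp [BilinForm.toMatrix_apply, ← hB.neg_eq (b j) (b i)]
  refine (BilinForm.nondegenerate_iff_det_ne_zero b).mp hnd
    (Matrix.det_eq_zero_of_transpose_eq_neg hskew ?_)
  simpa [Nat.not_even_iff_odd] using hodd

theorem even_finrank_sub_finrank_ker (hB : B.IsAlt) :
    Even (finrank K V - finrank K (ker B)) := by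
  obtain ⟨C, hC⟩ := (ker B).exists_isCompl
  have hdisj : Disjoint C (B.orthogonal C) := by
    refine Submodule.disjoint_def.mpr fun x hxC hx => ?_
    have hxker : x ∈ ker B := by
      ext y
      obtain ⟨k, c, hk, hc, rfl⟩ := Submodule.codisjoint_iff_exists_add_eq.mp hC.codisjoint y
      have hxk : B x k = 0 := hB.isRefl k x (by simp [mem_ker.mp hk])
      have hxc : B x c = 0 := hB.isRefl c x (hx c hc)
      simp [hxk, hxc]
    exact Submodule.disjoint_def.mp hC.disjoint x hxker hxC
  have := even_finrank_of_nondegenerate (B := B.restrict C) (fun x => hB x)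
    (B.nondegenerate_restrict_of_disjoint_orthogonal hB.isRefl hdisj)
  have hadd := Submodule.finrank_add_eq_of_isCompl hC
  rwa [show finrank K V - finrank K (ker B) = finrank K C by omega]

end LinearMap.BilinForm.IsAlt

theorem LinearMap.BilinForm.even_finrank_sub_finrank_of_radical {K W : Type*} [Field K]
    [CharZero K] [AddCommGroup W] [Module K W] [FiniteDimensional K W]
    {B : LinearMap.BilinForm K W} {L S : Submodule K W} (hB : (B.restrict L).IsAlt)
    (hSL : S ≤ L) (hS : ∀ x ∈ L, (∀ y ∈ L, B x y = 0) ↔ x ∈ S) :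
    Even (finrank K L - finrank K S) := by
  have hker : ker (B.restrict L) = S.comap L.subtype := by
    ext ⟨x, hx⟩
    rw [mem_ker, Submodule.mem_comap, Submodule.coe_subtype, ← hS x hx]
    exact ⟨fun h y hy => congr($h ⟨y, hy⟩), fun h => LinearMap.ext fun y => h y y.2⟩
  have := hB.even_finrank_sub_finrank_ker
  rwa [hker, (Submodule.comapSubtypeEquivOfLe hSL).finrank_eq] at this

section Dirac

variable {V : Type*} [AddCommGroup V] [Module ℝ V]

variable (V) in
noncomputable def diracForm : LinearMap.BilinForm ℝ (V × Dual ℝ V) :=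
  mk₂ ℝ diracPairing (fun _ _ _ => by simp [diracPairing]; ring)
    (fun _ _ _ => by simp [diracPairing]; ring) (fun _ _ _ => by simp [diracPairing]; ring)
    (fun _ _ _ => by simp [diracPairing]; ring)

variable (V) in
noncomputable def evalForm : LinearMap.BilinForm ℝ (V × Dual ℝ V) :=
  mk₂ ℝ (fun x y => x.2 y.1) (fun _ _ _ => by simp) (fun _ _ _ => by simp)
    (fun _ _ _ => by simp) (fun _ _ _ => by simp)

@[simp]
theorem diracForm_apply (x y : V × Dual ℝ V) : diracForm V x y = (x.2 y.1 + y.2 x.1) / 2 :=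
  rfl

theorem diracForm_isRefl : (diracForm V).IsRefl := fun x y h => by
  simp only [diracForm_apply] at h ⊢
  linarith

theorem diracForm_nondegenerate : (diracForm V).Nondegenerate := by
  refine (IsRefl.nondegenerate_iff_separatingLeft (B := diracForm V) diracForm_isRefl).mpr
    fun x hx => Prod.ext ?_ ?_
  · exact (forall_dual_apply_eq_zero_iff ℝ x.1).mp fun φ => by simpa using hx (0, φ)
  · ext v
    simpa using hx (v, 0)

def splitPart (L : Submodule ℝ (V × Dual ℝ V)) : Submodule ℝ (V × Dual ℝ V) :=
  L ⊓ range (inl ℝ V (Dual ℝ V)) ⊔ L ⊓ range (inr ℝ V (Dual ℝ V))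

theorem splitPart_le (L : Submodule ℝ (V × Dual ℝ V)) : splitPart L ≤ L :=
  sup_le inf_le_left inf_le_left

theorem finrank_splitPart [FiniteDimensional ℝ V] (L : Submodule ℝ (V × Dual ℝ V)) :
    finrank ℝ (splitPart L) = (lagType L).1 + (lagType L).2 := by
  have hdisj : L ⊓ range (inl ℝ V (Dual ℝ V)) ⊓ (L ⊓ range (inr ℝ V (Dual ℝ V))) = ⊥ :=
    (disjoint_inl_inr.mono inf_le_right inf_le_right).eq_bot
  have := Submodule.finrank_sup_add_finrank_inf_eq (L ⊓ range (inl ℝ V (Dual ℝ V)))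
    (L ⊓ range (inr ℝ V (Dual ℝ V)))
  rwa [hdisj, finrank_bot, add_zero] at this

namespace IsLagrangian

variable {L : Submodule ℝ (V × Dual ℝ V)}

theorem orthogonal_eq [FiniteDimensional ℝ V] (hL : IsLagrangian L) :
    (diracForm V).orthogonal L = L := by
  have hle : L ≤ (diracForm V).orthogonal L := fun x hx =>
    (BilinForm.mem_orthogonal_iff).mpr fun y hy => hL.2 y hy x hx
  refine (Submodule.eq_of_le_of_finrank_le hle ?_).symm
  rw [BilinForm.finrank_orthogonal diracForm_nondegenerate, finrank_prod,
    Subspace.dual_finrank_eq, hL.1]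
  omega

theorem snd_apply_fst_eq_zero (hL : IsLagrangian L) {x : V × Dual ℝ V} (hx : x ∈ L) :
    x.2 x.1 = 0 := by
  have := hL.2 x hx x hx
  simp only [diracPairing] at this
  linarith

theorem forall_snd_apply_fst_eq_zero_iff [FiniteDimensional ℝ V] (hL : IsLagrangian L)
    {x : V × Dual ℝ V} (hx : x ∈ L) :
    (∀ y ∈ L, x.2 y.1 = 0) ↔ x ∈ splitPart L := by
  constructor
  · intro h
    have hξ : ((0 : V), x.2) ∈ L := by
      rw [← hL.orthogonal_eq, BilinForm.mem_orthogonal_iff]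
      intro y hy
      simp [h y hy]
    refine Submodule.mem_sup.mpr ⟨x - (0, x.2), ⟨sub_mem hx hξ, x.1, ?_⟩, _, ⟨hξ, x.2, rfl⟩,
      sub_add_cancel _ _⟩
    ext <;> simp
  · rintro h y hy
    obtain ⟨_, ⟨-, v, rfl⟩, _, ⟨hξ, ξ, rfl⟩, rfl⟩ := Submodule.mem_sup.mp h
    simpa [diracPairing] using hL.2 _ hξ y hy

theorem lagType_add_le_finrank [FiniteDimensional ℝ V] (hL : IsLagrangian L) :
    (lagType L).1 + (lagType L).2 ≤ finrank ℝ V := by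
  rw [← finrank_splitPart, ← hL.1]
  exact Submodule.finrank_mono (splitPart_le L)

theorem even_finrank_sub_lagType [FiniteDimensional ℝ V] (hL : IsLagrangian L) :
    Even (finrank ℝ V - ((lagType L).1 + (lagType L).2)) := by
  rw [← finrank_splitPart, ← hL.1]
  exact BilinForm.even_finrank_sub_finrank_of_radical (B := evalForm V)
    (fun x => hL.snd_apply_fst_eq_zero x.2) (splitPart_le L)
    fun _ hx => hL.forall_snd_apply_fst_eq_zero_iff hx

end IsLagrangian

end Dirac

theorem odd_lagrangian_types_dim_three_general
    (V : Type*) [AddCommGroup V] [Module ℝ V]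
    (hdim : Module.finrank ℝ V = 3)
    (L : Submodule ℝ (V × Module.Dual ℝ V)) (hL : IsLagrangian L)
    (hodd : Odd (lagType L).2) :
    lagType L ∈ ({(0, 1), (0, 3), (2, 1)} : Set (ℕ × ℕ)) := by
  have : FiniteDimensional ℝ V := Module.finite_of_finrank_eq_succ hdim
  have hle := hL.lagType_add_le_finrank
  have heven := hL.even_finrank_sub_lagType
  rw [hdim] at hle heven
  obtain ⟨k, hk⟩ := heven
  obtain ⟨m, hm⟩ := hodd
  simp only [Set.mem_insert_iff, Set.mem_singleton_iff, Prod.ext_iff]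
  omega

/-- For `dim V = 3`: an odd Lagrangian has type `(0,1)`, `(0,3)`, or `(2,1)`. -/
theorem odd_lagrangian_types_dim_three
    (V : Type*) [AddCommGroup V] [Module ℝ V] [FiniteDimensional ℝ V]
    (hdim : Module.finrank ℝ V = 3)
    (L : Submodule ℝ (V × Module.Dual ℝ V)) (hL : IsLagrangian L)
    (hodd : Odd (lagType L).2) :
    lagType L ∈ ({(0, 1), (0, 3), (2, 1)} : Set (ℕ × ℕ)) :=
  odd_lagrangian_types_dim_three_general V hdim L hL hodd
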